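/- arXiv:2602.11573 — 4 statements merged into one kernel-verified Lean document; each statement's English description precedes it below -/
import Mathlib

section
/- For any R and R' with R ≤ R' ≤ L, the pruned neighbor set PN(R) obtained from the first R candidates is a subset of the pruned neighbor set PN(R') obtained from the first R' candidates. -/
open Classical in
noncomputable def prune {X : Type*} [MetricSpace X] (u : X) (α : ℝ) (M : ℕ) :
    List X → List X → List X
  | [], PN => PN
  | v :: rest, PN =>
    if M ≤ PN.length then PN
    else if ∃ w ∈ PN, α * dist v w < dist u v then prune u α M rest PN
    else prune u α M rest (PN ++ [v])

/-! The greedy procedure only ever appends to its current list, and it processes the candidates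
one at a time, so running it on a longer prefix of the candidates continues the run on a shorter
one. -/

section Prune

variable {X : Type*} [MetricSpace X] (u : X) (α : ℝ) (M : ℕ)

theorem prune_of_le_length (l : List X) {PN : List X} (h : M ≤ PN.length) :
    prune u α M l PN = PN := by
  cases l <;> simp [prune, h]

theorem prefix_prune (l PN : List X) : PN <+: prune u α M l PN := by
  induction l generalizing PN with
  | nil => exact List.prefix_refl PN
  | cons v rest ih =>
    rw [prune.eq_2]
    split_ifs
    · exact List.prefix_refl PN
    · exact ih PN
    · exact (List.prefix_append PN [v]).trans (ih _)

theorem prune_append (l₁ l₂ PN : List X) :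
    prune u α M (l₁ ++ l₂) PN = prune u α M l₂ (prune u α M l₁ PN) := by
  induction l₁ generalizing PN with
  | nil => rfl
  | cons v rest ih =>
    simp only [List.cons_append, prune.eq_2]
    split_ifs with h
    · exact (prune_of_le_length u α M l₂ h).symm
    · exact ih PN
    · exact ih (PN ++ [v])

theorem prune_prefix_prune {l₁ l₂ : List X} (h : l₁ <+: l₂) (PN : List X) :
    prune u α M l₁ PN <+: prune u α M l₂ PN := by
  obtain ⟨t, rfl⟩ := h
  rw [prune_append]
  exact prefix_prune u α M t _

end Prune

theorem stmt1_general {X : Type*} [MetricSpace X] (u : X) (C : List X)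
    (α : ℝ) (M : ℕ)
    (R R' : ℕ) (hRR' : R ≤ R') :
    prune u α M (C.take R) [] ⊆ prune u α M (C.take R') [] :=
  (prune_prefix_prune u α M (List.take_prefix_take_left hRR') []).subset

theorem stmt1 {X : Type*} [MetricSpace X] (u : X) (C : List X)
    (hsort : C.Pairwise fun a b => dist u a ≤ dist u b)
    (α : ℝ) (hα : 1 ≤ α) (M : ℕ) (hM : 1 ≤ M)
    (R R' : ℕ) (hRR' : R ≤ R') (hR'L : R' ≤ C.length) :
    prune u α M (C.take R) [] ⊆ prune u α M (C.take R') [] :=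
  stmt1_general u C α M R R' hRR'
end

section
/- For the same candidate list and the same α, the greedy pruning result is monotone in the degree bound: if M ≤ M' then PN(M) ⊆ PN(M'). In fact PN(M) is exactly the set of the first min(M, |PN(∞)|) elements (in candidate order) of the unbounded pruning result PN(∞). -/
open Classical in
noncomputable def pruneInf {X : Type*} [MetricSpace X] (u : X) (α : ℝ) :
    List X → List X → List X
  | [], PN => PN
  | v :: rest, PN =>
    if ∃ w ∈ PN, α * dist v w < dist u v then pruneInf u α rest PN
    else pruneInf u α rest (PN ++ [v])

section

variable {X : Type*} [MetricSpace X] (u : X) (α : ℝ)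

theorem prefix_pruneInf : ∀ (C PN : List X), PN <+: pruneInf u α C PN
  | [], PN => by rw [pruneInf]
  | v :: C, PN => by
    rw [pruneInf]
    split_ifs
    · exact prefix_pruneInf C PN
    · exact (PN.prefix_append [v]).trans (prefix_pruneInf C (PN ++ [v]))

/-- Until the bound `M` is reached both procedures make the same decisions, and once it is
reached `prune` stops while `pruneInf` only appends. -/
theorem prune_eq_take_pruneInf (M : ℕ) :
    ∀ (C PN : List X), PN.length ≤ M → prune u α M C PN = (pruneInf u α C PN).take M
  | [], PN, h => by rw [prune, pruneInf, List.take_of_length_le h]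
  | v :: C, PN, h => by
    by_cases hfull : M ≤ PN.length
    · obtain rfl := le_antisymm h hfull
      rw [prune, if_pos le_rfl]
      exact List.prefix_iff_eq_take.mp (prefix_pruneInf u α _ PN)
    · rw [prune, if_neg hfull, pruneInf]
      split_ifs
      · exact prune_eq_take_pruneInf M C PN h
      · exact prune_eq_take_pruneInf M C (PN ++ [v]) (by simp; omega)

theorem prune_nil_eq_take (M : ℕ) (C : List X) :
    prune u α M C [] = (pruneInf u α C []).take M :=
  prune_eq_take_pruneInf u α M C [] (Nat.zero_le M)

end

theorem stmt3_general {X : Type*} [MetricSpace X] (u : X) (C : List X)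
    (α : ℝ) :
    (∀ M M' : ℕ, 1 ≤ M → M ≤ M' → prune u α M C [] ⊆ prune u α M' C []) ∧
    (∀ M : ℕ, 1 ≤ M →
      prune u α M C [] = (pruneInf u α C []).take (min M (pruneInf u α C []).length)) := by
  refine ⟨fun M M' _ hM => ?_, fun M _ => ?_⟩
  · rw [prune_nil_eq_take, prune_nil_eq_take]
    exact List.take_subset_take_left _ hM
  · rw [prune_nil_eq_take, ← List.take_eq_take_min]

theorem stmt3 {X : Type*} [MetricSpace X] (u : X) (C : List X)
    (hsort : C.Pairwise fun a b => dist u a ≤ dist u b)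
    (α : ℝ) (hα : 1 ≤ α) :
    (∀ M M' : ℕ, 1 ≤ M → M ≤ M' → prune u α M C [] ⊆ prune u α M' C []) ∧
    (∀ M : ℕ, 1 ≤ M →
      prune u α M C [] = (pruneInf u α C []).take (min M (pruneInf u α C []).length)) :=
  stmt3_general u C α
end

section
/- The hypervolume improvement is subadditive over batches: for finite point sets S₁, S₂ (each point dominating the reference point r) and a finite set Y, HVI(S₁ ∪ S₂, Y, r) ≤ HVI(S₁, Y, r) + HVI(S₂, Y, r). -/
/-!
Every hypervolume is the Lebesgue measure of the region dominated by a point set, and the region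
of `Y ∪ S₁ ∪ S₂` is the union of the regions of `Y ∪ S₁` and `Y ∪ S₂`, whose intersection contains
the region of `Y`. Subadditivity of the improvement is therefore submodularity of the measure,
`μ (B ∪ C) + μ (B ∩ C) = μ B + μ C`, together with monotonicity on `A ⊆ B ∩ C`.
-/

noncomputable def HV (r : ℝ × ℝ) (Y : Finset (ℝ × ℝ)) : ℝ :=
  (MeasureTheory.volume (⋃ y ∈ Y, Set.Icc r.1 y.1 ×ˢ Set.Icc r.2 y.2)).toReal

noncomputable def HVI (S Y : Finset (ℝ × ℝ)) (r : ℝ × ℝ) : ℝ :=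
  HV r (Y ∪ S) - HV r Y

open MeasureTheory Set

theorem MeasureTheory.measureReal_union_add_le_of_subset_inter {α : Type*} [MeasurableSpace α]
    {μ : Measure α} {A B C : Set α} (hC : MeasurableSet C) (hB : μ B ≠ ⊤) (hC' : μ C ≠ ⊤)
    (hA : A ⊆ B ∩ C) :
    μ.real (B ∪ C) + μ.real A ≤ μ.real B + μ.real C := by
  rw [← measureReal_union_add_inter hC hB hC']
  gcongr
  exact measure_ne_top_of_subset inter_subset_left hB

def dominatedRegion (r : ℝ × ℝ) (Y : Finset (ℝ × ℝ)) : Set (ℝ × ℝ) :=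
  ⋃ y ∈ Y, Icc r.1 y.1 ×ˢ Icc r.2 y.2

theorem HV_eq_measureReal (r : ℝ × ℝ) (Y : Finset (ℝ × ℝ)) :
    HV r Y = volume.real (dominatedRegion r Y) := rfl

theorem measurableSet_dominatedRegion (r : ℝ × ℝ) (Y : Finset (ℝ × ℝ)) :
    MeasurableSet (dominatedRegion r Y) :=
  Y.measurableSet_biUnion fun _ _ => measurableSet_Icc.prod measurableSet_Icc

theorem volume_dominatedRegion_ne_top (r : ℝ × ℝ) (Y : Finset (ℝ × ℝ)) :
    volume (dominatedRegion r Y) ≠ ⊤ :=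
  (measure_biUnion_lt_top Y.finite_toSet fun _ _ =>
    (isCompact_Icc.prod isCompact_Icc).measure_lt_top).ne

theorem dominatedRegion_union (r : ℝ × ℝ) (Y S : Finset (ℝ × ℝ)) :
    dominatedRegion r (Y ∪ S) = dominatedRegion r Y ∪ dominatedRegion r S :=
  Finset.set_biUnion_union Y S _

theorem HV_union_union_add_le (r : ℝ × ℝ) (Y S₁ S₂ : Finset (ℝ × ℝ)) :
    HV r (Y ∪ (S₁ ∪ S₂)) + HV r Y ≤ HV r (Y ∪ S₁) + HV r (Y ∪ S₂) := by
  simp only [HV_eq_measureReal]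
  have hUnion : dominatedRegion r (Y ∪ (S₁ ∪ S₂)) =
      dominatedRegion r (Y ∪ S₁) ∪ dominatedRegion r (Y ∪ S₂) := by
    rw [← dominatedRegion_union, Finset.union_union_union_comm, Finset.union_self]
  rw [hUnion]
  refine measureReal_union_add_le_of_subset_inter (measurableSet_dominatedRegion r _)
    (volume_dominatedRegion_ne_top r _) (volume_dominatedRegion_ne_top r _) ?_
  simp only [dominatedRegion_union]
  exact subset_inter subset_union_left subset_union_left

theorem stmt11_general (r : ℝ × ℝ) (Y S₁ S₂ : Finset (ℝ × ℝ)) :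
    HVI (S₁ ∪ S₂) Y r ≤ HVI S₁ Y r + HVI S₂ Y r := by
  have := HV_union_union_add_le r Y S₁ S₂
  simp only [HVI]
  linarith

theorem stmt11 (r : ℝ × ℝ) (Y S₁ S₂ : Finset (ℝ × ℝ))
    (hY : ∀ y ∈ Y, r.1 ≤ y.1 ∧ r.2 ≤ y.2)
    (hS₁ : ∀ y ∈ S₁, r.1 ≤ y.1 ∧ r.2 ≤ y.2)
    (hS₂ : ∀ y ∈ S₂, r.1 ≤ y.1 ∧ r.2 ≤ y.2) :
    HVI (S₁ ∪ S₂) Y r ≤ HVI S₁ Y r + HVI S₂ Y r :=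
  stmt11_general r Y S₁ S₂
end

section
/- For the greedy pruning with α ≥ 1 in a metric space, any two accepted neighbors v, w ∈ PN with δ(u,w) ≤ δ(u,v) satisfy δ(v, w) ≥ δ(u, v)/α ≥ δ(u, w)/α; consequently, the accepted neighbors within distance d of u form a (d/α)-separated set, so in a doubling metric space the out-degree of u restricted to any annulus {v : d ≤ δ(u,v) ≤ 2d} is bounded by a constant depending only on α and the doubling dimension. -/
/-!
Since candidates are scanned by increasing distance from `u`, when `v` is accepted every
previously accepted `w` is at most as far from `u` as `v`, and acceptance means
`δ(u, v) ≤ α δ(v, w)`. So any two accepted points are `δ(u, ·)/α`-far apart, measured at the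
farther one. For the packing bound, iterate the doubling property `k` times to cover
`B(u, 2d)` by `λ^k` balls of radius `2d / 2^k`; once `2^k ≥ 8α`, two points of a
`(d/α)`-separated set cannot share a ball, so the set has at most `λ^k` points.
-/

open Metric

section Prune

variable {X : Type*} [MetricSpace X] (u : X) (α : ℝ) (M : ℕ)

open Classical in
theorem pairwise_prune (C PN : List X) (hsort : C.Pairwise fun a b => dist u a ≤ dist u b)
    (hPN_le : ∀ w ∈ PN, ∀ v ∈ C, dist u w ≤ dist u v)
    (hPN : PN.Pairwise fun w v => max (dist u w) (dist u v) ≤ α * dist w v) :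
    (prune u α M C PN).Pairwise fun w v => max (dist u w) (dist u v) ≤ α * dist w v := by
  induction C generalizing PN with
  | nil => simpa [prune] using hPN
  | cons v rest ih =>
    rw [prune]
    split_ifs with _ hrejected
    · exact hPN
    · exact ih PN hsort.of_cons (fun w hw x hx => hPN_le w hw x (List.mem_cons_of_mem _ hx)) hPN
    · push Not at hrejected
      refine ih (PN ++ [v]) hsort.of_cons ?_ ?_
      · intro w hw x hx
        rcases List.mem_append.1 hw with hw | hw
        · exact hPN_le w hw x (List.mem_cons_of_mem _ hx)
        · rw [List.mem_singleton.1 hw]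
          exact List.rel_of_pairwise_cons hsort hx
      · refine List.pairwise_append.2 ⟨hPN, List.pairwise_singleton _ _, ?_⟩
        intro w hw x hx
        rw [List.mem_singleton.1 hx, max_eq_right (hPN_le w hw v List.mem_cons_self), dist_comm w v]
        exact hrejected w hw

theorem max_dist_le_mul_dist_of_mem_prune {C : List X}
    (hsort : C.Pairwise fun a b => dist u a ≤ dist u b) {v w : X}
    (hv : v ∈ prune u α M C []) (hw : w ∈ prune u α M C []) (hne : v ≠ w) :
    max (dist u v) (dist u w) ≤ α * dist v w := by
  have : Std.Symm fun w v : X => max (dist u w) (dist u v) ≤ α * dist w v :=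
    ⟨fun a b h => by rwa [max_comm, dist_comm b a]⟩
  exact (pairwise_prune u α M C [] hsort (by simp) (by simp)).forall hv hw hne

end Prune

section Packing

variable {X : Type*} [PseudoMetricSpace X]

theorem Finset.card_le_card_of_forall_exists_dist_le {S s : Finset X} {r : ℝ}
    (hcover : ∀ x ∈ S, ∃ y ∈ s, dist x y ≤ r)
    (hsep : ∀ x ∈ S, ∀ y ∈ S, x ≠ y → 2 * r < dist x y) : S.card ≤ s.card := by
  refine Finset.card_le_card_of_forall_subsingleton (fun x y => dist x y ≤ r) hcover ?_
  intro c _ x ⟨hx, hxc⟩ y ⟨hy, hyc⟩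
  by_contra hne
  have : dist x y ≤ 2 * r := by
    linarith [dist_triangle_right x y c, (hxc : dist x c ≤ r), (hyc : dist y c ≤ r)]
  exact (hsep x hx y hy hne).not_ge this

variable (X) in
def IsDoublingWith (lam : ℕ) : Prop :=
  ∀ (x : X) (r : ℝ), 0 < r → ∃ s : Finset X, s.card ≤ lam ∧
    closedBall x (2 * r) ⊆ ⋃ y ∈ s, closedBall y r

theorem IsDoublingWith.exists_cover_closedBall_two_pow_mul {lam : ℕ} (h : IsDoublingWith X lam)
    (k : ℕ) (x : X) {r : ℝ} (hr : 0 < r) :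
    ∃ s : Finset X, s.card ≤ lam ^ k ∧ closedBall x (2 ^ k * r) ⊆ ⋃ y ∈ s, closedBall y r := by
  classical
  induction k generalizing x with
  | zero => exact ⟨{x}, by simp, by simp⟩
  | succ k ih =>
    obtain ⟨s, hs_card, hs_cover⟩ := h x (2 ^ k * r) (by positivity)
    choose t ht_card ht_cover using ih
    refine ⟨s.biUnion t, ?_, ?_⟩
    · calc (s.biUnion t).card ≤ ∑ y ∈ s, (t y).card := Finset.card_biUnion_le
        _ ≤ s.card * lam ^ k := Finset.sum_le_card_nsmul _ _ _ fun y _ => ht_card y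
        _ ≤ lam ^ (k + 1) := by rw [pow_succ']; exact Nat.mul_le_mul_right _ hs_card
    · intro z hz
      rw [pow_succ', mul_assoc] at hz
      obtain ⟨y, hy, hzy⟩ := Set.mem_iUnion₂.1 (hs_cover hz)
      obtain ⟨c, hc, hzc⟩ := Set.mem_iUnion₂.1 (ht_cover y hzy)
      exact Set.mem_iUnion₂.2 ⟨c, Finset.mem_biUnion.2 ⟨y, hy, hc⟩, hzc⟩

theorem IsDoublingWith.card_le_pow {lam : ℕ} (h : IsDoublingWith X lam) {x : X} {R c : ℝ}
    (hR : 0 < R) {k : ℕ} (hk : 2 * R < 2 ^ k * c) {S : Finset X}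
    (hS : ∀ y ∈ S, y ∈ closedBall x R) (hsep : ∀ y ∈ S, ∀ z ∈ S, y ≠ z → c ≤ dist y z) :
    S.card ≤ lam ^ k := by
  have hr : 0 < R / 2 ^ k := by positivity
  obtain ⟨s, hs_card, hs_cover⟩ := h.exists_cover_closedBall_two_pow_mul k x hr
  rw [mul_div_cancel₀ _ (by positivity)] at hs_cover
  refine le_trans (Finset.card_le_card_of_forall_exists_dist_le (r := R / 2 ^ k) ?_ ?_) hs_card
  · intro y hy
    simpa only [Set.mem_iUnion₂, mem_closedBall, exists_prop] using hs_cover (hS y hy)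
  · intro y hy z hz hne
    have : 2 * (R / 2 ^ k) < c := by
      rw [← mul_div_assoc, div_lt_iff₀ (by positivity), mul_comm c]
      exact hk
    exact this.trans_le (hsep y hy z hz hne)

end Packing

theorem stmt19_general {X : Type*} [MetricSpace X] (u : X) (C : List X)
    (hsort : C.Pairwise fun a b => dist u a ≤ dist u b)
    (α : ℝ) (hα : 1 ≤ α) (M : ℕ)
    (lam : ℕ)
    (hdoubling : ∀ (x : X) (r : ℝ), 0 < r → ∃ s : Finset X, s.card ≤ lam ∧
      Metric.closedBall x (2 * r) ⊆ ⋃ y ∈ s, Metric.closedBall y r)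
    (d : ℝ) (hd : 0 < d) :
    (∀ v ∈ prune u α M C [], ∀ w ∈ prune u α M C [], v ≠ w → dist u w ≤ dist u v →
      dist u v / α ≤ dist v w ∧ dist u w / α ≤ dist u v / α) ∧
    (∀ S : Finset X, (∀ x ∈ S, x ∈ Metric.closedBall u (2 * d)) →
      (∀ x ∈ S, ∀ y ∈ S, x ≠ y → d / α ≤ dist x y) →
      S.card ≤ lam ^ Nat.clog 2 ⌈8 * α⌉₊) := by
  have hα0 : 0 < α := zero_lt_one.trans_le hα
  refine ⟨fun v hv w hw hne hle => ⟨?_, by gcongr⟩, fun S hS hsep => ?_⟩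
  · have := max_dist_le_mul_dist_of_mem_prune u α M hsort hv hw hne
    rw [max_eq_left hle] at this
    rwa [div_le_iff₀ hα0, mul_comm]
  · have h2k : 8 * α ≤ 2 ^ Nat.clog 2 ⌈8 * α⌉₊ := by
      calc 8 * α ≤ ⌈8 * α⌉₊ := Nat.le_ceil _
        _ ≤ ((2 ^ Nat.clog 2 ⌈8 * α⌉₊ : ℕ) : ℝ) := by exact_mod_cast Nat.le_pow_clog one_lt_two _
        _ = 2 ^ Nat.clog 2 ⌈8 * α⌉₊ := by push_cast; rfl
    refine IsDoublingWith.card_le_pow hdoubling (by positivity) ?_ hS hsep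
    calc 2 * (2 * d) < 8 * α * (d / α) := by field_simp; linarith
      _ ≤ _ := by gcongr

theorem stmt19 {X : Type*} [MetricSpace X] (u : X) (C : List X)
    (hsort : C.Pairwise fun a b => dist u a ≤ dist u b)
    (α : ℝ) (hα : 1 ≤ α) (M : ℕ) (hM : 1 ≤ M)
    (lam : ℕ)
    (hdoubling : ∀ (x : X) (r : ℝ), 0 < r → ∃ s : Finset X, s.card ≤ lam ∧
      Metric.closedBall x (2 * r) ⊆ ⋃ y ∈ s, Metric.closedBall y r)
    (d : ℝ) (hd : 0 < d) :
    (∀ v ∈ prune u α M C [], ∀ w ∈ prune u α M C [], v ≠ w → dist u w ≤ dist u v →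
      dist u v / α ≤ dist v w ∧ dist u w / α ≤ dist u v / α) ∧
    (∀ S : Finset X, (∀ x ∈ S, x ∈ Metric.closedBall u (2 * d)) →
      (∀ x ∈ S, ∀ y ∈ S, x ≠ y → d / α ≤ dist x y) →
      S.card ≤ lam ^ Nat.clog 2 ⌈8 * α⌉₊) :=
  stmt19_general u C hsort α hα M lam hdoubling d hd
end
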